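/- For the 6-state qubit POVM (F_s⁻¹ = 3·diag(1−s₁², 1−s₂², 1−s₃²)) and fidelity-distance Hessian H_s^F = (1/2)(I + s sᵀ/(1−‖s‖²)), the matrix G_s^F = √(H_s^F) F_s⁻¹ √(H_s^F) satisfies tr[G_s^F] = 9/2 + (3/(1−‖s‖²))((s₁s₂)² + (s₂s₃)² + (s₃s₁)²). -/

import Mathlib

open Matrix

section PosSemidefSqrt

open scoped ComplexOrder

/-- The positive semidefinite square root of a positive semidefinite matrix
(removed from Mathlib; restored with its December 2024 definition). -/
noncomputable def Matrix.PosSemidef.sqrt {n 𝕜 : Type*} [Fintype n] [RCLike 𝕜] [DecidableEq n]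
    {A : Matrix n n 𝕜} (hA : A.PosSemidef) : Matrix n n 𝕜 :=
  hA.1.eigenvectorUnitary.1 * diagonal ((↑) ∘ (fun i => Real.sqrt (hA.1.eigenvalues i))) *
    (star hA.1.eigenvectorUnitary : Matrix n n 𝕜)

end PosSemidefSqrt

open scoped ComplexOrder in
theorem Matrix.PosSemidef.sqrt_mul_self {n 𝕜 : Type*} [Fintype n] [RCLike 𝕜] [DecidableEq n]
    {A : Matrix n n 𝕜} (hA : A.PosSemidef) : hA.sqrt * hA.sqrt = A := by
  unfold Matrix.PosSemidef.sqrt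
  have hU : (star hA.1.eigenvectorUnitary : Matrix n n 𝕜) * hA.1.eigenvectorUnitary.1 = 1 :=
    Unitary.coe_star_mul_self _
  conv_rhs => rw [hA.1.spectral_theorem, Unitary.conjStarAlgAut_apply]
  simp only [mul_assoc]
  rw [← mul_assoc (star hA.1.eigenvectorUnitary : Matrix n n 𝕜), hU, one_mul,
    ← mul_assoc (diagonal _), diagonal_mul_diagonal]
  congr 3
  funext i
  simp only [Function.comp_apply, ← RCLike.ofReal_mul,
    Real.mul_self_sqrt (hA.eigenvalues_nonneg i)]

/-- for the 6-state qubit POVM (`F_s⁻¹ = 3·diag(1-sᵢ²)`) and the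
fidelity-distance Hessian `H_s^F = (1/2)(I + ssᵀ/(1-‖s‖²))`, the matrix
`G_s^F = √(H_s^F) F_s⁻¹ √(H_s^F)` satisfies
`tr[G_s^F] = 9/2 + (3/(1-‖s‖²))((s₁s₂)² + (s₂s₃)² + (s₃s₁)²)`. -/
theorem stmt13 (s : Fin 3 → ℝ) (hs : s ⬝ᵥ s < 1)
    (hH : ((1 / 2 : ℝ) • ((1 : Matrix (Fin 3) (Fin 3) ℝ) +
        (1 - s ⬝ᵥ s)⁻¹ • vecMulVec s s)).PosSemidef) :
    (hH.sqrt * ((3 : ℝ) • Matrix.diagonal (fun i => 1 - s i ^ 2)) * hH.sqrt).trace =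
      9 / 2 + (3 / (1 - s ⬝ᵥ s)) *
        ((s 0 * s 1) ^ 2 + (s 1 * s 2) ^ 2 + (s 2 * s 0) ^ 2) := by
  have hne : (1 - s ⬝ᵥ s) ≠ 0 := by linarith
  rw [Matrix.trace_mul_cycle, hH.sqrt_mul_self]
  simp only [Matrix.trace, Matrix.diag, Matrix.mul_apply, Matrix.smul_apply,
    Matrix.add_apply, Matrix.one_apply, Matrix.vecMulVec_apply, Matrix.diagonal_apply,
    Fin.sum_univ_three, dotProduct, smul_eq_mul]
  norm_num [Fin.ext_iff]
  have hne2 : 1 - s 0 ^ 2 + (-s 1 ^ 2 - s 2 ^ 2) ≠ 0 := by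
    simp only [dotProduct, Fin.sum_univ_three] at hne
    intro h; apply hne; nlinarith [h]
  linear_combination ((3 / 2) * (s 0 ^ 2 + s 1 ^ 2 + s 2 ^ 2)) * mul_inv_cancel₀ hne2
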